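/- Let ħ > 0, let Σ be a real symmetric positive-definite 2N×2N matrix with symplectic eigenvalues μ_1 ≥ … ≥ μ_N > 0, and let λ > 0. Then the complex Hermitian matrix λ^{−2}Σ + (iħ/2)J is positive semidefinite if and only if μ_N ≥ λ²ħ/2. In particular, if μ_N = ħ/2 then λ^{−2}Σ + (iħ/2)J is positive semidefinite if and only if λ ≤ 1. -/

import Mathlib

open MeasureTheory Matrix Complex Real
open scoped ComplexOrder

/-- The standard symplectic matrix `J = [[0, I], [-I, 0]]` (N×N blocks). -/
noncomputable def stdJ (N : ℕ) : Matrix (Fin N ⊕ Fin N) (Fin N ⊕ Fin N) ℝ :=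
  Matrix.fromBlocks 0 1 (-1) 0

/-- `μ` is a symplectic eigenvalue of the real `2N×2N` matrix `M` if `μ > 0` and
`iμ` is an eigenvalue of the complex matrix `JM`. -/
noncomputable def IsSympEig {N : ℕ} (M : Matrix (Fin N ⊕ Fin N) (Fin N ⊕ Fin N) ℝ)
    (μ : ℝ) : Prop :=
  0 < μ ∧ ∃ v : (Fin N ⊕ Fin N) → ℂ, v ≠ 0 ∧
    ((stdJ N * M).map (fun r => (r : ℂ))) *ᵥ v = (Complex.I * (μ : ℂ)) • v


lemma mapC_mul {n : Type*} [Fintype n] (A B : Matrix n n ℝ) :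
    (A * B).map (fun r => (r : ℂ)) = A.map (fun r => (r : ℂ)) * B.map (fun r => (r : ℂ)) :=
  Matrix.map_mul (f := Complex.ofRealHom)

lemma stdJ_mul_stdJ (N : ℕ) : stdJ N * stdJ N = -1 := by
  rw [stdJ, Matrix.fromBlocks_multiply]
  ext (i|i) (j|j) <;>
    simp [Matrix.one_apply, eq_comm]

lemma stdJ_transpose (N : ℕ) : (stdJ N)ᵀ = -stdJ N := by
  rw [stdJ, Matrix.fromBlocks_transpose]
  ext (i|i) (j|j) <;> simp [Matrix.one_apply, eq_comm]

lemma cJ_mul_cJ (N : ℕ) :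
    (stdJ N).map (fun r => (r : ℂ)) * (stdJ N).map (fun r => (r : ℂ)) = -1 := by
  rw [← mapC_mul, stdJ_mul_stdJ]
  ext i j
  simp [Matrix.one_apply, apply_ite]

lemma cJ_conjTranspose (N : ℕ) :
    ((stdJ N).map (fun r => (r : ℂ)))ᴴ = -((stdJ N).map (fun r => (r : ℂ))) := by
  ext i j
  have := congrFun (congrFun (stdJ_transpose N) i) j
  simp only [Matrix.transpose_apply, Matrix.neg_apply] at this
  simp [Matrix.conjTranspose_apply, Matrix.map_apply, this]

open scoped MatrixOrder in
lemma posDef_mapC {n : Type*} [Fintype n] [DecidableEq n]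
    {M : Matrix n n ℝ} (hM : M.PosDef) : (M.map (fun r => (r : ℂ))).PosDef := by
  set R := CFC.sqrt M with hR
  have hRR : R * R = M := CFC.sqrt_mul_sqrt_self M hM.posSemidef.nonneg
  have hRH : Rᴴ = R := (CFC.sqrt_nonneg M).posSemidef.1
  have hRdet : IsUnit R.det := by
    have h1 : IsUnit M.det := (Matrix.isUnit_iff_isUnit_det M).mp hM.isUnit
    rw [← hRR, Matrix.det_mul] at h1
    exact isUnit_of_mul_isUnit_left h1
  set B := R.map (fun r => (r : ℂ)) with hB
  have hBH : Bᴴ = B := by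
    ext i j
    have : R j i = R i j := by
      conv_lhs => rw [← hRH]
      simp [Matrix.conjTranspose_apply]
    simp [hB, Matrix.conjTranspose_apply, Matrix.map_apply, this]
  have hMB : M.map (fun r => (r : ℂ)) = Bᴴ * B := by
    rw [hBH, hB, ← mapC_mul, hRR]
  have hBdet : IsUnit B.det := by
    have : B.det = (R.det : ℂ) := (Complex.ofRealHom.map_det R).symm
    rw [this]
    simp only [isUnit_iff_ne_zero, ne_eq, Complex.ofReal_eq_zero]
    exact hRdet.ne_zero
  rw [hMB]
  have hH : (Bᴴ * B).IsHermitian := by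
    have : (Bᴴ * B)ᴴ = Bᴴ * B := by
      rw [Matrix.conjTranspose_mul, Matrix.conjTranspose_conjTranspose]
    exact this
  refine Matrix.PosDef.of_dotProduct_mulVec_pos hH (fun x hx => ?_)
  have hBx : B *ᵥ x ≠ 0 := by
    intro h
    exact hx (Matrix.mulVec_injective_iff_isUnit.mpr
      ((Matrix.isUnit_iff_isUnit_det B).mpr hBdet) (h.trans (Matrix.mulVec_zero B).symm))
  have : dotProduct (star x) ((Bᴴ * B) *ᵥ x) = dotProduct (star (B *ᵥ x)) (B *ᵥ x) := by
    rw [← Matrix.mulVec_mulVec, Matrix.dotProduct_mulVec, Matrix.star_mulVec,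
      Matrix.dotProduct_mulVec]
  rw [this]
  exact Matrix.dotProduct_star_self_pos_iff.mpr hBx

lemma posSemidef_smul_iff {n : Type*} [Fintype n] {M : Matrix n n ℂ} {r : ℝ} (hr : 0 < r) :
    ((r : ℂ) • M).PosSemidef ↔ M.PosSemidef := by
  have key : ∀ (s : ℝ), 0 < s → ∀ (A : Matrix n n ℂ), A.PosSemidef → ((s : ℂ) • A).PosSemidef := by
    intro s hs A hA
    refine Matrix.PosSemidef.of_dotProduct_mulVec_nonneg ?_ ?_
    · show ((s : ℂ) • A)ᴴ = (s : ℂ) • A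
      rw [Matrix.conjTranspose_smul]
      simp [hA.1.eq, Complex.conj_ofReal, hA.1]
    · intro x
      have h0 := hA.dotProduct_mulVec_nonneg x
      have : dotProduct (star x) (((s : ℂ) • A) *ᵥ x) = (s : ℂ) * dotProduct (star x) (A *ᵥ x) := by
        rw [Matrix.smul_mulVec, dotProduct_smul, smul_eq_mul]
      rw [this]
      rw [Complex.le_def] at h0 ⊢
      simp only [Complex.zero_re, Complex.zero_im, Complex.mul_re, Complex.mul_im,
        Complex.ofReal_re, Complex.ofReal_im] at *
      constructor
      · nlinarith [h0.1]
      · rw [← h0.2]; ring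
  constructor
  · intro h
    have := key r⁻¹ (by positivity) _ h
    rwa [smul_smul, ← Complex.ofReal_mul, inv_mul_cancel₀ hr.ne', Complex.ofReal_one,
      one_smul] at this
  · exact key r hr M

open scoped MatrixOrder in
lemma key {N : ℕ} (Sig : Matrix (Fin N ⊕ Fin N) (Fin N ⊕ Fin N) ℝ) (hSig : Sig.PosDef)
    (c : ℝ) (hc : 0 < c) :
    ((Sig.map (fun r => (r : ℂ)))
        + (Complex.I * (c : ℂ)) • ((stdJ N).map (fun r => (r : ℂ)))).PosSemidef
      ↔ ∀ t : ℝ, IsSympEig Sig t → c ≤ t := by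
  classical
  set A := Sig.map (fun r => (r : ℂ)) with hAdef
  set Jc := (stdJ N).map (fun r => (r : ℂ)) with hJdef
  have hJJ : Jc * Jc = -1 := by rw [hJdef]; exact cJ_mul_cJ N
  have hJH : Jcᴴ = -Jc := by rw [hJdef]; exact cJ_conjTranspose N
  have hA : A.PosDef := posDef_mapC hSig
  have hPSD : A.PosSemidef := hA.posSemidef
  set S := CFC.sqrt A with hSdef
  have hS : S.PosSemidef := (CFC.sqrt_nonneg A).posSemidef
  have hSS : S * S = A := CFC.sqrt_mul_sqrt_self A hPSD.nonneg
  have hSH : Sᴴ = S := hS.1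
  have hdet : IsUnit S.det := by
    have h1 : IsUnit A.det := (Matrix.isUnit_iff_isUnit_det A).mp hA.isUnit
    rw [← hSS, Matrix.det_mul] at h1
    exact isUnit_of_mul_isUnit_left h1
  have hS1 : S * S⁻¹ = 1 := Matrix.mul_nonsing_inv _ hdet
  have hS2 : S⁻¹ * S = 1 := Matrix.nonsing_inv_mul _ hdet
  have hSiH : (S⁻¹)ᴴ = S⁻¹ := hS.1.inv
  set G := S⁻¹ * Jc * S⁻¹ with hGdef
  set M := A + (Complex.I * (c : ℂ)) • Jc with hMdef
  set K := (1 : Matrix (Fin N ⊕ Fin N) (Fin N ⊕ Fin N) ℂ) + (Complex.I * (c : ℂ)) • G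
    with hKdef
  have hSiA : S⁻¹ * A = S := by rw [← hSS, ← Matrix.mul_assoc, hS2, one_mul]
  have hAS : A * S⁻¹ = S := by rw [← hSS, Matrix.mul_assoc, hS1, mul_one]
  have hGS : G * S = S⁻¹ * Jc := by
    rw [hGdef, Matrix.mul_assoc (S⁻¹ * Jc) S⁻¹ S, hS2, mul_one]
  have hSG : S * G = Jc * S⁻¹ := by
    rw [hGdef]
    simp only [← Matrix.mul_assoc]
    rw [hS1, one_mul]
  have hSGS : S * G * S = Jc := by
    rw [hSG, Matrix.mul_assoc, hS2, mul_one]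
  have hKM : M = S * K * S := by
    have h1 : S * K * S = S * S + (Complex.I * (c : ℂ)) • (S * G * S) := by
      rw [hKdef, mul_add, mul_one, add_mul, Matrix.mul_smul, Matrix.smul_mul]
    rw [h1, hSGS, hSS, hMdef]
  have hSMS : S⁻¹ * M * S⁻¹ = K := by
    rw [hKM]
    have h1 : S⁻¹ * (S * K * S) * S⁻¹ = S⁻¹ * S * (K * (S * S⁻¹)) := by
      simp only [Matrix.mul_assoc]
    rw [h1, hS1, hS2, one_mul, mul_one]
  have hiff1 : M.PosSemidef ↔ K.PosSemidef := by
    constructor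
    · intro h
      have h2 := h.conjTranspose_mul_mul_same S⁻¹
      rwa [hSiH, hSMS] at h2
    · intro h
      have h2 := h.conjTranspose_mul_mul_same S
      rwa [hSH, ← hKM] at h2
  have hSunit : IsUnit S := (Matrix.isUnit_iff_isUnit_det S).mpr hdet
  have hSinj := Matrix.mulVec_injective_iff_isUnit.mpr hSunit
  have hSiunit : IsUnit S⁻¹ := ⟨⟨S⁻¹, S, hS2, hS1⟩, rfl⟩
  have hSiinj := Matrix.mulVec_injective_iff_isUnit.mpr hSiunit
  rw [hiff1]
  constructor
  · -- K PSD → all symplectic eigenvalues ≥ c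
    intro hK t ht
    obtain ⟨htpos, v, hv0, hveq⟩ := ht
    rw [mapC_mul, ← hAdef, ← hJdef] at hveq
    set z := Complex.I * (t : ℂ) with hz
    have hzne : z ≠ 0 := by
      rw [hz]
      exact mul_ne_zero Complex.I_ne_zero (by exact_mod_cast htpos.ne')
    have h1 : -(A *ᵥ v) = z • (Jc *ᵥ v) := by
      have h1 : Jc *ᵥ ((Jc * A) *ᵥ v) = Jc *ᵥ (z • v) := by rw [hveq]
      rw [Matrix.mulVec_mulVec, ← Matrix.mul_assoc, hJJ, Matrix.mulVec_smul,
        neg_one_mul, Matrix.neg_mulVec] at h1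
      exact h1
    have hJv : Jc *ᵥ v = z⁻¹ • -(A *ᵥ v) := ((inv_smul_eq_iff₀ hzne).mpr h1).symm
    set w := S *ᵥ v with hw
    have hw0 : w ≠ 0 := by
      intro h
      exact hv0 (hSinj (h.trans (Matrix.mulVec_zero S).symm))
    have hGw : G *ᵥ w = (-z⁻¹) • w := by
      have h2 : G *ᵥ w = (S⁻¹ * Jc) *ᵥ v := by
        rw [hw, Matrix.mulVec_mulVec, hGS]
      rw [h2, ← Matrix.mulVec_mulVec, hJv, Matrix.mulVec_smul, Matrix.mulVec_neg,
        Matrix.mulVec_mulVec, hSiA, ← hw, smul_neg, neg_smul]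
    have hsc : (1 : ℂ) + (Complex.I * (c : ℂ)) * (-z⁻¹) = ((1 - c / t : ℝ) : ℂ) := by
      rw [hz, mul_inv, Complex.inv_I]
      have htne : (t : ℂ) ≠ 0 := by
        simp [Complex.ofReal_eq_zero, htpos.ne']
      push_cast
      field_simp
      ring_nf
      rw [Complex.I_sq]
      ring
    have hKw : K *ᵥ w = ((1 - c / t : ℝ) : ℂ) • w := by
      rw [hKdef, Matrix.add_mulVec, Matrix.one_mulVec, Matrix.smul_mulVec, hGw,
        smul_smul, ← hsc, add_smul, one_smul]
    have h0 := hK.dotProduct_mulVec_nonneg w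
    rw [hKw, dotProduct_smul, smul_eq_mul] at h0
    have hp : 0 < dotProduct (star w) w := Matrix.dotProduct_star_self_pos_iff.mpr hw0
    rw [Complex.le_def] at h0
    rw [Complex.lt_def] at hp
    have h2 : 0 ≤ (1 - c / t) * (dotProduct (star w) w).re := by
      have h3 := h0.1
      have h4 := hp.2.symm
      simpa [Complex.mul_re, h4] using h3
    have h5 : 0 ≤ 1 - c / t := by
      by_contra h6
      push_neg at h6
      nlinarith [mul_neg_of_neg_of_pos h6 hp.1]
    rw [sub_nonneg] at h5
    exact (div_le_one htpos).mp h5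
  · -- all symplectic eigenvalues ≥ c → K PSD
    intro hall
    have hGH : Gᴴ = -G := by
      rw [hGdef]
      simp only [Matrix.conjTranspose_mul, hSiH, hJH]
      simp [Matrix.mul_neg, Matrix.neg_mul, Matrix.mul_assoc]
    have hKH : K.IsHermitian := by
      show Kᴴ = K
      rw [hKdef, Matrix.conjTranspose_add, Matrix.conjTranspose_one,
        Matrix.conjTranspose_smul, hGH]
      congr 1
      have hstar : star (Complex.I * (c : ℂ)) = -(Complex.I * (c : ℂ)) := by
        simp only [star_mul', Complex.star_def, Complex.conj_I, Complex.conj_ofReal]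
        ring
      rw [hstar, neg_smul, smul_neg, neg_neg]
    apply hKH.posSemidef_iff_eigenvalues_nonneg.mpr
    intro i
    by_cases hr0 : 0 ≤ hKH.eigenvalues i
    · exact hr0
    push_neg at hr0
    exfalso
    set r := hKH.eigenvalues i with hrdef
    set w : (Fin N ⊕ Fin N) → ℂ := ⇑(hKH.eigenvectorBasis i) with hwdef
    have hw0 : w ≠ 0 := by
      have h := hKH.eigenvectorBasis.orthonormal.ne_zero i
      intro hcon
      apply h
      ext x
      exact congrFun hcon x
    have hsmul : ∀ (a : ℝ) (x : (Fin N ⊕ Fin N) → ℂ), a • x = ((a : ℂ)) • x := by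
      intro a x
      funext y
      simp [Complex.real_smul]
    have hKw : K *ᵥ w = ((r : ℝ) : ℂ) • w := by
      have h := hKH.mulVec_eigenvectorBasis i
      rw [hsmul] at h
      exact h
    have hzc : (Complex.I * (c : ℂ)) ≠ 0 :=
      mul_ne_zero Complex.I_ne_zero (by exact_mod_cast hc.ne')
    set s : ℝ := (1 - r) / c with hsdef
    have hs : 0 < s := div_pos (by linarith) hc
    have hGw : G *ᵥ w = (Complex.I * ((s : ℝ) : ℂ)) • w := by
      have h1 : w + (Complex.I * (c : ℂ)) • (G *ᵥ w) = ((r : ℝ) : ℂ) • w := by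
        rw [← hKw, hKdef, Matrix.add_mulVec, Matrix.one_mulVec, Matrix.smul_mulVec]
      have h2 : (Complex.I * (c : ℂ)) • (G *ᵥ w) = (((r : ℝ) : ℂ) - 1) • w := by
        rw [sub_smul, one_smul, ← h1]
        abel
      have h3 : G *ᵥ w = ((Complex.I * (c : ℂ))⁻¹ * (((r : ℝ) : ℂ) - 1)) • w := by
        rw [← smul_smul, ← h2, inv_smul_smul₀ hzc]
      rw [h3]
      congr 1
      rw [mul_inv, Complex.inv_I, hsdef]
      push_cast
      have hcne : (c : ℂ) ≠ 0 := by simp [Complex.ofReal_eq_zero, hc.ne']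
      field_simp
      ring
    set v := S⁻¹ *ᵥ w with hv
    have hv0 : v ≠ 0 := by
      intro h
      exact hw0 (hSiinj (h.trans (Matrix.mulVec_zero S⁻¹).symm))
    have hzs : (Complex.I * ((s : ℝ) : ℂ)) ≠ 0 :=
      mul_ne_zero Complex.I_ne_zero (by exact_mod_cast hs.ne')
    have hAv : A *ᵥ v = S *ᵥ w := by
      rw [hv, Matrix.mulVec_mulVec, hAS]
    have hJv : Jc *ᵥ v = (Complex.I * ((s : ℝ) : ℂ)) • (S *ᵥ w) := by
      rw [hv, Matrix.mulVec_mulVec, ← hSG, ← Matrix.mulVec_mulVec, hGw, Matrix.mulVec_smul]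
    have hSw' : S *ᵥ w = (Complex.I * ((s : ℝ) : ℂ))⁻¹ • (Jc *ᵥ v) := by
      rw [hJv, inv_smul_smul₀ hzs]
    have hneg : -(Complex.I * ((s : ℝ) : ℂ))⁻¹ = Complex.I * ((1 / s : ℝ) : ℂ) := by
      rw [mul_inv, Complex.inv_I]
      have hsne : (s : ℂ) ≠ 0 := by simp [Complex.ofReal_eq_zero, hs.ne']
      push_cast
      field_simp
    have hfin : (Jc * A) *ᵥ v = (Complex.I * ((1 / s : ℝ) : ℂ)) • v := by
      rw [← Matrix.mulVec_mulVec, hAv, hSw', Matrix.mulVec_smul, Matrix.mulVec_mulVec, hJJ]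
      rw [show ((-1 : Matrix (Fin N ⊕ Fin N) (Fin N ⊕ Fin N) ℂ)) *ᵥ v = -v by
        rw [Matrix.neg_mulVec, Matrix.one_mulVec]]
      rw [smul_neg, ← neg_smul, hneg]
    have hse : IsSympEig Sig (1 / s) := by
      refine ⟨by positivity, v, hv0, ?_⟩
      rw [mapC_mul, ← hAdef, ← hJdef]
      exact hfin
    have hcs := hall _ hse
    have h2 : (1 / s) * s = 1 := by field_simp
    have h3 : c * s ≤ 1 := by nlinarith [mul_le_mul_of_nonneg_right hcs hs.le]
    have h4 : c * s = 1 - r := by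
      rw [hsdef]
      field_simp
    linarith

/-- For `Σ` real symmetric positive definite with symplectic spectrum
`μ 0 ≥ ⋯ ≥ μ (N-1) > 0` and `λ > 0`, the matrix `λ⁻²Σ + (iℏ/2)J` is positive semidefinite
iff the smallest symplectic eigenvalue satisfies `μ_N ≥ λ²ℏ/2`; in particular, when
`μ_N = ℏ/2` this holds iff `λ ≤ 1`. -/
theorem rescaled_posSemidef_iff
    {N : ℕ} (hN : 0 < N) (ℏ : ℝ) (hℏ : 0 < ℏ)
    (Sig : Matrix (Fin N ⊕ Fin N) (Fin N ⊕ Fin N) ℝ) (hSig : Sig.PosDef)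
    (μ : Fin N → ℝ) (hμpos : ∀ i, 0 < μ i) (hμmono : Antitone μ)
    (hspec : ∀ c : ℝ, IsSympEig Sig c ↔ ∃ i, c = μ i)
    (lam : ℝ) (hlam : 0 < lam) :
    (((((lam ^ 2)⁻¹ : ℝ) • Sig).map (fun r => (r : ℂ))
        + (Complex.I * ((ℏ / 2 : ℝ) : ℂ)) • (stdJ N).map (fun r => (r : ℂ))).PosSemidef
      ↔ lam ^ 2 * ℏ / 2 ≤ μ ⟨N - 1, Nat.sub_lt hN one_pos⟩) ∧
    (μ ⟨N - 1, Nat.sub_lt hN one_pos⟩ = ℏ / 2 →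
      (((((lam ^ 2)⁻¹ : ℝ) • Sig).map (fun r => (r : ℂ))
          + (Complex.I * ((ℏ / 2 : ℝ) : ℂ)) • (stdJ N).map (fun r => (r : ℂ))).PosSemidef
        ↔ lam ≤ 1)) := by
  set c : ℝ := lam ^ 2 * ℏ / 2 with hcdef
  have hc : 0 < c := by positivity
  have hT : (((lam ^ 2)⁻¹ : ℝ) • Sig).map (fun r => (r : ℂ))
        + (Complex.I * ((ℏ / 2 : ℝ) : ℂ)) • (stdJ N).map (fun r => (r : ℂ))
      = ((((lam ^ 2)⁻¹ : ℝ)) : ℂ) • ((Sig.map (fun r => (r : ℂ)))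
        + (Complex.I * (c : ℂ)) • (stdJ N).map (fun r => (r : ℂ))) := by
    ext i j
    simp only [Matrix.add_apply, Matrix.smul_apply, Matrix.map_apply, smul_eq_mul, hcdef]
    push_cast
    have : (lam : ℂ) ≠ 0 := by exact_mod_cast hlam.ne'
    field_simp
  have hmain : ((((lam ^ 2)⁻¹ : ℝ) • Sig).map (fun r => (r : ℂ))
        + (Complex.I * ((ℏ / 2 : ℝ) : ℂ)) • (stdJ N).map (fun r => (r : ℂ))).PosSemidef
      ↔ c ≤ μ ⟨N - 1, Nat.sub_lt hN one_pos⟩ := by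
    rw [hT, posSemidef_smul_iff (by positivity), key Sig hSig c hc]
    constructor
    · intro h
      exact h _ ((hspec _).mpr ⟨_, rfl⟩)
    · intro h t ht
      obtain ⟨i, rfl⟩ := (hspec t).mp ht
      refine le_trans h (hμmono ?_)
      have hi : (i : ℕ) ≤ N - 1 := by have := i.isLt; omega
      simpa [Fin.le_def] using hi
  refine ⟨hmain, fun hμe => ?_⟩
  rw [hmain, hμe]
  constructor
  · intro h
    nlinarith [sq_nonneg (lam - 1), sq_nonneg (lam + 1)]
  · intro h
    have h2 : lam ^ 2 ≤ 1 := by nlinarith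
    rw [hcdef]
    nlinarith
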